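/- arXiv:1008.0686 — 5 statements merged into one kernel-verified Lean document; each statement's English description precedes it below -/
import Mathlib

section
/- For all nonnegative integers m and j, and a formal variable t, one has (1/(q)_j) * Σ_{n=0}^{m} q^{mn} ((q^{-m})_n (t q^{-n})_j / (q)_n) = 0 if 0 ≤ j < m, and = (q^{-1} t)^m (t)_{j-m}/(q)_{j-m} if j ≥ m, where (x)_n = ∏_{k=0}^{n-1}(1 - x q^k) is the q-shifted factorial. -/
/-- The q-shifted factorial `(x)_n = ∏_{k=0}^{n-1} (1 - x q^k)`. -/
def qpoch {F : Type*} [Field F] (q x : F) (n : ℕ) : F :=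
  ∏ k ∈ Finset.range n, (1 - x * q ^ k)

/-!
Write `S_j(t, m)` for the sum on the left, without the factor `1/(q)_j`. Its coefficients
`c(m, n) = q^{mn} (q^{-m})_n / (q)_n = (-1)^n q^{n(n-1)/2} [m choose n]_q` obey the q-Pascal rule
`c(m+1, n+1) = c(m, n+1) - q^m c(m, n)`, and `(t q^{-n-1})_j = ((t/q) q^{-n})_j`, so
`S_j(t, m+1) = S_j(t, m) - q^m S_j(t/q, m)`. The right-hand side satisfies the same recursion in `m`
because `(t)_{d+1} - (t/q)_{d+1} = (t/q) (1 - q^{d+1}) (t)_d`, and both sides agree at `m = 0`.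
-/

open Finset

section

variable {F : Type*} [Field F]

@[simp]
lemma qpoch_zero (q x : F) : qpoch q x 0 = 1 := prod_range_zero _

lemma qpoch_succ (q x : F) (n : ℕ) : qpoch q x (n + 1) = qpoch q x n * (1 - x * q ^ n) :=
  prod_range_succ _ _

lemma qpoch_mul_inv_succ {q : F} (hq : q ≠ 0) (x : F) (n : ℕ) :
    qpoch q (x * q⁻¹) (n + 1) = (1 - x * q⁻¹) * qpoch q x n := by
  rw [qpoch, prod_range_succ', pow_zero, mul_one, mul_comm]
  congr 1
  refine prod_congr rfl fun k _ => ?_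
  rw [pow_succ]
  field_simp

lemma qpoch_inv_pow_eq_zero {q : F} (hq : q ≠ 0) {m n : ℕ} (hmn : m < n) :
    qpoch q (q ^ m)⁻¹ n = 0 :=
  prod_eq_zero (mem_range.mpr hmn) (by rw [inv_mul_cancel₀ (pow_ne_zero m hq), sub_self])

lemma one_sub_mul_pow_ne_zero {q : F} (hq1 : ∀ n : ℕ, 1 ≤ n → q ^ n ≠ 1) (k : ℕ) :
    (1 : F) - q * q ^ k ≠ 0 := by
  rw [sub_ne_zero, ← pow_succ', ne_comm]
  exact hq1 (k + 1) k.succ_pos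

lemma qpoch_self_ne_zero {q : F} (hq1 : ∀ n : ℕ, 1 ≤ n → q ^ n ≠ 1) (n : ℕ) :
    qpoch q q n ≠ 0 :=
  prod_ne_zero_iff.mpr fun k _ => one_sub_mul_pow_ne_zero hq1 k

lemma qpoch_div_sub_qpoch_mul_inv_div {q : F} (hq : q ≠ 0)
    (hq1 : ∀ n : ℕ, 1 ≤ n → q ^ n ≠ 1) (t : F) (d : ℕ) :
    qpoch q t (d + 1) / qpoch q q (d + 1) - qpoch q (t * q⁻¹) (d + 1) / qpoch q q (d + 1) =
      q⁻¹ * t * (qpoch q t d / qpoch q q d) := by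
  have hnum : qpoch q t d * (1 - t * q ^ d) - (1 - t * q⁻¹) * qpoch q t d =
      q⁻¹ * t * qpoch q t d * (1 - q * q ^ d) := by
    field_simp
    ring
  rw [qpoch_mul_inv_succ hq, qpoch_succ, qpoch_succ, div_sub_div_same, hnum,
    mul_div_mul_right _ _ (one_sub_mul_pow_ne_zero hq1 d), mul_div_assoc]

noncomputable def signedQBinom (q : F) (m n : ℕ) : F :=
  q ^ (m * n) * qpoch q (q ^ m)⁻¹ n / qpoch q q n

@[simp]
lemma signedQBinom_zero_right (q : F) (m : ℕ) : signedQBinom q m 0 = 1 := by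
  simp [signedQBinom]

lemma signedQBinom_eq_zero {q : F} (hq : q ≠ 0) {m n : ℕ} (hmn : m < n) :
    signedQBinom q m n = 0 := by
  rw [signedQBinom, qpoch_inv_pow_eq_zero hq hmn, mul_zero, zero_div]

lemma signedQBinom_succ_succ {q : F} (hq : q ≠ 0) (hq1 : ∀ n : ℕ, 1 ≤ n → q ^ n ≠ 1)
    (m n : ℕ) :
    signedQBinom q (m + 1) (n + 1) = signedQBinom q m (n + 1) - q ^ m * signedQBinom q m n := by
  have hd := one_sub_mul_pow_ne_zero hq1 n
  have hQ := qpoch_self_ne_zero hq1 n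
  have hqm : q ^ m ≠ 0 := pow_ne_zero m hq
  rw [signedQBinom, signedQBinom, signedQBinom, pow_succ q m, mul_inv, qpoch_mul_inv_succ hq,
    qpoch_succ q (q ^ m)⁻¹ n, qpoch_succ q q n]
  field_simp
  ring

noncomputable def qSum (q t : F) (j m : ℕ) : F :=
  ∑ n ∈ range (m + 1), signedQBinom q m n * qpoch q (t * (q ^ n)⁻¹) j

lemma qSum_succ {q : F} (hq : q ≠ 0) (hq1 : ∀ n : ℕ, 1 ≤ n → q ^ n ≠ 1) (t : F) (j m : ℕ) :
    qSum q t j (m + 1) = qSum q t j m - q ^ m * qSum q (t * q⁻¹) j m := by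
  have hshift (n : ℕ) : t * (q ^ (n + 1))⁻¹ = t * q⁻¹ * (q ^ n)⁻¹ := by
    rw [pow_succ, mul_inv, mul_assoc, mul_comm (q ^ n)⁻¹]
  have htop : signedQBinom q m (m + 1) * qpoch q (t * (q ^ (m + 1))⁻¹) j = 0 := by
    rw [signedQBinom_eq_zero hq m.lt_succ_self, zero_mul]
  have hextend : qSum q t j m =
      ∑ n ∈ range (m + 1 + 1), signedQBinom q m n * qpoch q (t * (q ^ n)⁻¹) j := by
    rw [sum_range_succ, htop, add_zero, qSum]
  rw [hextend, qSum, qSum]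
  simp only [sum_range_succ' _ (m + 1), signedQBinom_succ_succ hq hq1, hshift, sub_mul,
    sum_sub_distrib, mul_sum, signedQBinom_zero_right, mul_assoc]
  ring

noncomputable def qSumClosedForm (q t : F) (j m : ℕ) : F :=
  if j < m then 0 else (q⁻¹ * t) ^ m * qpoch q t (j - m) / qpoch q q (j - m)

lemma qSumClosedForm_succ {q : F} (hq : q ≠ 0) (hq1 : ∀ n : ℕ, 1 ≤ n → q ^ n ≠ 1) (t : F)
    (j m : ℕ) :
    qSumClosedForm q t j (m + 1) =
      qSumClosedForm q t j m - q ^ m * qSumClosedForm q (t * q⁻¹) j m := by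
  have hscale : q ^ m * (q⁻¹ * (t * q⁻¹)) ^ m = (q⁻¹ * t) ^ m := by
    rw [← mul_pow]
    congr 1
    field_simp
  simp only [qSumClosedForm]
  rcases lt_trichotomy j m with hjm | rfl | hjm
  · simp [hjm, hjm.trans m.lt_succ_self]
  · simp only [lt_irrefl, Nat.lt_succ_self, if_true, if_false, Nat.sub_self, qpoch_zero, mul_one,
      div_one, hscale, sub_self]
  · obtain ⟨d, rfl⟩ := Nat.exists_eq_add_of_lt hjm
    rw [if_neg (by omega), if_neg (by omega), if_neg (by omega),
      show m + d + 1 - (m + 1) = d by omega, show m + d + 1 - m = d + 1 by omega]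
    simp only [mul_div_assoc]
    rw [← mul_assoc (q ^ m), hscale, ← mul_sub, qpoch_div_sub_qpoch_mul_inv_div hq hq1, pow_succ]
    ring

lemma inv_qpoch_mul_qSum {q : F} (hq : q ≠ 0) (hq1 : ∀ n : ℕ, 1 ≤ n → q ^ n ≠ 1) (t : F)
    (j m : ℕ) : (qpoch q q j)⁻¹ * qSum q t j m = qSumClosedForm q t j m := by
  induction m generalizing t with
  | zero => simp [qSum, qSumClosedForm, inv_mul_eq_div]
  | succ m ih =>
    rw [qSum_succ hq hq1, mul_sub, mul_left_comm, ih, ih, qSumClosedForm_succ hq hq1]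

end

theorem stmt_0 {F : Type*} [Field F] (q t : F) (hq : q ≠ 0)
    (hq1 : ∀ n : ℕ, 1 ≤ n → q ^ n ≠ 1) (m j : ℕ) :
    (qpoch q q j)⁻¹ *
      ∑ n ∈ Finset.range (m + 1),
        q ^ (m * n) * qpoch q ((q ^ m)⁻¹) n * qpoch q (t * (q ^ n)⁻¹) j / qpoch q q n =
    if j < m then 0
    else (q⁻¹ * t) ^ m * qpoch q t (j - m) / qpoch q q (j - m) := by
  rw [← qSumClosedForm, ← inv_qpoch_mul_qSum hq hq1, qSum]
  congr 1
  refine sum_congr rfl fun n _ => ?_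
  rw [signedQBinom]
  ring
end

section
/- For all nonnegative integers m and formal variables s, t: Σ_{n=0}^{m} q^{mn} ((q^{-m})_n/(q)_n) (q^{-n} s t)_n = (q^{-1} s t)^m, where (x)_n is the q-shifted factorial ∏_{k=0}^{n-1}(1 - x q^k). -/
open Finset

section

variable {F : Type*} [Field F]

/-- With truncated subtraction the factor `k = m` is `1 - q^0 = 0`, so this vanishes for `n > m`. -/
def qbinomNum (q : F) (m n : ℕ) : F := ∏ k ∈ range n, (1 - q ^ (m - k))

def qbinom (q : F) (m n : ℕ) : F := qbinomNum q m n / qpoch q q n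

def qNewton (q w : F) (n : ℕ) : F := ∏ k ∈ range n, (w - q ^ k)

lemma qbinomNum_eq_zero (q : F) {m n : ℕ} (h : m < n) : qbinomNum q m n = 0 :=
  prod_eq_zero (mem_range.mpr h) (by simp)

lemma qbinom_eq_zero (q : F) {m n : ℕ} (h : m < n) : qbinom q m n = 0 := by
  rw [qbinom, qbinomNum_eq_zero q h, zero_div]

@[simp] lemma qbinom_zero_right (q : F) (m : ℕ) : qbinom q m 0 = 1 := by
  simp [qbinom, qbinomNum, qpoch]

lemma qbinomNum_succ_succ (q : F) (m n : ℕ) :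
    qbinomNum q (m + 1) (n + 1) =
      q ^ (n + 1) * qbinomNum q m (n + 1) + (1 - q ^ (n + 1)) * qbinomNum q m n := by
  rcases le_or_gt n m with h | h
  · obtain ⟨d, rfl⟩ := Nat.exists_eq_add_of_le h
    have shift :
        qbinomNum q (n + d + 1) (n + 1) = qbinomNum q (n + d) n * (1 - q ^ (n + d + 1)) := by
      rw [qbinomNum, prod_range_succ']
      exact congrArg₂ _ (prod_congr rfl fun k hk => by
        rw [mem_range] at hk; congr 2; omega) rfl
    have last : qbinomNum q (n + d) (n + 1) = qbinomNum q (n + d) n * (1 - q ^ d) := by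
      rw [qbinomNum, prod_range_succ, Nat.add_sub_cancel_left, qbinomNum]
    rw [shift, last]
    linear_combination qbinomNum q (n + d) n * (pow_add q (n + 1) d).symm
  · rw [qbinomNum_eq_zero q (by omega : m + 1 < n + 1), qbinomNum_eq_zero q (by omega : m < n + 1),
      qbinomNum_eq_zero q h]
    ring

lemma qbinom_succ_succ {q : F} (hq1 : ∀ n : ℕ, 1 ≤ n → q ^ n ≠ 1) (m n : ℕ) :
    qbinom q (m + 1) (n + 1) = q ^ (n + 1) * qbinom q m (n + 1) + qbinom q m n := by
  have hD := qpoch_self_ne_zero hq1 n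
  have hfac : 1 - q ^ (n + 1) ≠ 0 := sub_ne_zero.mpr (hq1 (n + 1) n.succ_pos).symm
  simp only [qbinom, qpoch_succ, qbinomNum_succ_succ, ← pow_succ']
  field_simp

lemma qNewton_succ (q w : F) (n : ℕ) : qNewton q w (n + 1) = qNewton q w n * (w - q ^ n) :=
  prod_range_succ _ _

lemma pow_eq_sum_qbinom_mul_qNewton {q : F} (hq1 : ∀ n : ℕ, 1 ≤ n → q ^ n ≠ 1) (w : F)
    (m : ℕ) :
    w ^ m = ∑ n ∈ range (m + 1), qbinom q m n * qNewton q w n := by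
  induction m with
  | zero => simp [qNewton]
  | succ m ih =>
    set b := qbinom q m
    set N := qNewton q w
    have b0 : b 0 = 1 := qbinom_zero_right q m
    have top : b (m + 1) = 0 := qbinom_eq_zero q m.lt_succ_self
    have N0 : N 0 = 1 := prod_range_zero _
    have Nsucc (n : ℕ) : N (n + 1) = N n * (w - q ^ n) := qNewton_succ q w n
    -- `w N(n) = N(n+1) + q^n N(n)`; the `q^n N(n)` part, reindexed, supplies the
    -- `q^(n+1) b(n+1)` half of the q-Pascal rule
    have shifted : ∑ n ∈ range (m + 1), q ^ n * b n * N n =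
        ∑ n ∈ range (m + 1), q ^ (n + 1) * b (n + 1) * N (n + 1) + 1 := by
      have low := sum_range_succ' (fun n => q ^ n * b n * N n) (m + 1)
      have high := sum_range_succ (fun n => q ^ n * b n * N n) (m + 1)
      rw [b0, N0] at low
      rw [top] at high
      linear_combination low - high
    calc w ^ (m + 1)
        = ∑ n ∈ range (m + 1), (b n * N (n + 1) + q ^ n * b n * N n) := by
          rw [pow_succ, ih, sum_mul]
          exact sum_congr rfl fun n _ => by rw [Nsucc]; ring
      _ = ∑ n ∈ range (m + 1), (q ^ (n + 1) * b (n + 1) + b n) * N (n + 1) + 1 := by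
          simp only [sum_add_distrib, shifted, add_mul]
          ring
      _ = ∑ n ∈ range (m + 1 + 1), qbinom q (m + 1) n * N n := by
          rw [sum_range_succ' (fun n => qbinom q (m + 1) n * N n), qbinom_zero_right, N0,
            one_mul]
          simp only [qbinom_succ_succ hq1]
          rfl

lemma pow_mul_qpoch_mul_qpoch_eq {q : F} (hq : q ≠ 0) (x : F) {m n : ℕ} (hnm : n ≤ m) :
    q ^ (m * n) * qpoch q (q ^ m)⁻¹ n * qpoch q ((q ^ n)⁻¹ * x) n =
      qbinomNum q m n * qNewton q (q⁻¹ * x) n := by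
  have hpow : q ^ (m * n) = ∏ _k ∈ range n, q ^ m := by rw [prod_const, card_range, pow_mul]
  rw [hpow, qbinomNum, qNewton, ← prod_mul_distrib, qpoch, qpoch,
    ← prod_range_reflect (fun k => 1 - (q ^ n)⁻¹ * x * q ^ k), ← prod_mul_distrib,
    ← prod_mul_distrib]
  refine prod_congr rfl fun k hk => ?_
  replace hk : k < n := mem_range.mp hk
  obtain ⟨a, rfl⟩ : ∃ a, m = k + a := ⟨m - k, by omega⟩
  obtain ⟨b, rfl⟩ : ∃ b, n = k + 1 + b := ⟨n - 1 - k, by omega⟩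
  rw [show k + 1 + b - 1 - k = b by omega, Nat.add_sub_cancel_left]
  simp only [pow_add, pow_one]
  field_simp
  ring

end

theorem stmt_1 {F : Type*} [Field F] (q s t : F) (hq : q ≠ 0)
    (hq1 : ∀ n : ℕ, 1 ≤ n → q ^ n ≠ 1) (m : ℕ) :
    ∑ n ∈ Finset.range (m + 1),
      q ^ (m * n) * qpoch q ((q ^ m)⁻¹) n / qpoch q q n * qpoch q ((q ^ n)⁻¹ * s * t) n =
    (q⁻¹ * s * t) ^ m := by
  rw [mul_assoc q⁻¹, pow_eq_sum_qbinom_mul_qNewton hq1 (q⁻¹ * (s * t)) m]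
  refine Finset.sum_congr rfl fun n hn => ?_
  rw [mul_assoc _ s, div_mul_eq_mul_div,
    pow_mul_qpoch_mul_qpoch_eq hq _ (Nat.lt_succ_iff.mp (mem_range.mp hn)), qbinom]
  ring
end

section
/- With B_n(z) := ∏_{j=1}^{n}(z - q^{j-1})/(1 - q^j), for every n ≥ 1 one has B_n(z) = Σ_{m=1}^{n} a_m(n-1) ((z-1)/(1-q))^m, where a_m(n-1) := Σ_{n = m_1 > m_2 > ⋯ > m_m > 0} 1/([m_1]⋯[m_m]) with [k] := (1-q^k)/(1-q) the q-integer (i.e., a_m(n-1) is the sum over strictly decreasing chains of length m starting at m_1 = n of products of reciprocal q-integers). -/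
/-!
Write `x = (z - 1)/(1 - q)`. Dropping the top element `n` of a chain identifies the chains of
length `m + 1` with the `m`-subsets of `{1, …, n - 1}`, so `a_{m+1}(n-1)` is `[n]⁻¹` times the
`m`-th elementary symmetric function of `1/[1], …, 1/[n-1]`, and the right-hand side is
`x/[n] · ∏_{k=1}^{n-1} (1 + x/[k])`. On the other side `(z - q^j)/(1 - q^{j+1}) = (x + [j])/[j+1]`,
and the product of these factors over `j < n` is the same expression.
-/

/-- The q-integer `[k] = (1-q^k)/(1-q)`. -/
def qint {F : Type*} [Field F] (q : F) (k : ℕ) : F :=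
  (1 - q ^ k) / (1 - q)

/-- `B_n(z) = ∏_{j=1}^{n} (z - q^{j-1})/(1 - q^j)`. -/
def Bpoly {F : Type*} [Field F] (q z : F) (n : ℕ) : F :=
  ∏ j ∈ Finset.range n, (z - q ^ j) / (1 - q ^ (j + 1))

open Finset

section Chains

def chains (m n : ℕ) : Finset (Fin (m + 1) → Fin (n + 1)) :=
  univ.filter fun c =>
    (∀ i j : Fin (m + 1), i < j → c j < c i) ∧ ((c 0 : ℕ) = n) ∧ ∀ i, 1 ≤ (c i : ℕ)

variable {m n : ℕ}

lemma mem_chains {c : Fin (m + 1) → Fin (n + 1)} :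
    c ∈ chains m n ↔ StrictAnti c ∧ (c 0 : ℕ) = n ∧ ∀ i, 1 ≤ (c i : ℕ) := by
  simp [chains, StrictAnti]

def chainTail (c : Fin (m + 1) → Fin (n + 1)) : Finset ℕ :=
  univ.image fun i : Fin m => (c i.succ : ℕ)

lemma strictAnti_val_succ {c : Fin (m + 1) → Fin (n + 1)} (hc : StrictAnti c) :
    StrictAnti fun i : Fin m => (c i.succ : ℕ) :=
  Fin.val_strictMono.comp_strictAnti (hc.comp_strictMono Fin.strictMono_succ)

lemma chainTail_mem_powersetCard {c : Fin (m + 1) → Fin (n + 1)} (hc : c ∈ chains m n) :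
    chainTail c ∈ powersetCard m (Ico 1 n) := by
  obtain ⟨hanti, h0, hpos⟩ := mem_chains.1 hc
  refine mem_powersetCard.2 ⟨fun k hk => ?_, ?_⟩
  · obtain ⟨i, -, rfl⟩ := mem_image.1 hk
    have : (c i.succ : ℕ) < c 0 := hanti (Fin.succ_pos i)
    exact mem_Ico.2 ⟨hpos _, this.trans_eq h0⟩
  · rw [chainTail, card_image_of_injective _ (strictAnti_val_succ hanti).injective, card_univ,
      Fintype.card_fin]

lemma chainTail_injOn : Set.InjOn (chainTail (m := m) (n := n)) (chains m n) := by
  intro c hc c' hc' h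
  obtain ⟨hanti, h0, -⟩ := mem_chains.1 hc
  obtain ⟨hanti', h0', -⟩ := mem_chains.1 hc'
  have htail : (fun i : Fin m => (c i.succ : ℕ)) = fun i => (c' i.succ : ℕ) := by
    rw [← (strictAnti_val_succ hanti).range_inj (strictAnti_val_succ hanti'), ← Set.image_univ,
      ← Set.image_univ, ← coe_univ, ← coe_image, ← coe_image]
    exact congrArg _ h
  funext i
  exact Fin.cases (Fin.ext (h0.trans h0'.symm)) (fun j => Fin.ext (congrFun htail j)) i

lemma chainTail_surjOn (hn : 1 ≤ n) : Set.SurjOn (chainTail (m := m) (n := n)) (chains m n)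
    (powersetCard m (Ico 1 n)) := by
  intro t ht
  obtain ⟨hsub, hcard⟩ := mem_powersetCard.1 (mem_coe.1 ht)
  set e := t.orderEmbOfFin hcard
  have he : ∀ i, e i ∈ Ico 1 n := fun i => hsub (t.orderEmbOfFin_mem hcard i)
  refine ⟨Fin.cons (Fin.last n) fun i => ⟨e i.rev, Nat.lt_succ_of_lt (mem_Ico.1 (he _)).2⟩,
    mem_chains.2 ⟨?_, ?_, ?_⟩, ?_⟩
  · exact (Fin.strictMono_cons (α := (Fin (n + 1))ᵒᵈ)).2
      ⟨fun i => Fin.lt_def.2 (mem_Ico.1 (he _)).2,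
        fun i j hij => e.strictMono (Fin.rev_strictAnti hij)⟩
  · simp
  · refine Fin.cases (by simpa using hn) (fun i => ?_)
    simpa using (mem_Ico.1 (he i.rev)).1
  · calc chainTail (Fin.cons (Fin.last n) fun i => ⟨e i.rev, _⟩ : Fin (m + 1) → Fin (n + 1))
        = (univ.image Fin.rev).image e := by simp [chainTail, image_image, Function.comp_def]
      _ = t := by rw [image_univ_of_surjective Fin.rev_surjective, image_orderEmbOfFin_univ]

theorem sum_chains_prod_eq_mul_sum_powersetCard {R : Type*} [CommSemiring R] (g : ℕ → R)
    (hn : 1 ≤ n) :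
    ∑ c ∈ chains m n, ∏ i, g (c i) = g n * ∑ t ∈ powersetCard m (Ico 1 n), ∏ k ∈ t, g k := by
  rw [mul_sum]
  refine sum_nbij chainTail (fun c hc => chainTail_mem_powersetCard hc) chainTail_injOn
    (chainTail_surjOn hn) fun c hc => ?_
  obtain ⟨hanti, h0, -⟩ := mem_chains.1 hc
  rw [Fin.prod_univ_succ, h0, chainTail, prod_image (strictAnti_val_succ hanti).injective.injOn]

end Chains

theorem sum_powersetCard_mul_pow {ι R : Type*} [CommSemiring R] (s : Finset ι) (f : ι → R)
    (x : R) :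
    ∑ k ∈ range (#s + 1), (∑ t ∈ powersetCard k s, ∏ i ∈ t, f i) * x ^ k =
      ∏ i ∈ s, (1 + x * f i) := by
  have hcard : ∀ t ∈ s.powerset, #t ∈ range (#s + 1) := fun t ht =>
    mem_range.2 (Nat.lt_succ_of_le (card_le_card (mem_powerset.1 ht)))
  rw [prod_one_add, ← sum_fiberwise_of_maps_to hcard]
  refine sum_congr rfl fun k _ => ?_
  rw [powersetCard_eq_filter, sum_mul]
  refine sum_congr rfl fun t ht => ?_
  rw [prod_mul_distrib, prod_const, (mem_filter.1 ht).2, mul_comm]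

section QInt

variable {F : Type*} [Field F] {q : F}

lemma one_sub_ne_zero_of_pow_ne_one (hq : ∀ k : ℕ, 1 ≤ k → q ^ k ≠ 1) : 1 - q ≠ 0 :=
  sub_ne_zero.2 fun h => hq 1 le_rfl (by rw [pow_one, ← h])

lemma qint_ne_zero (hq : ∀ k : ℕ, 1 ≤ k → q ^ k ≠ 1) {k : ℕ} (hk : 1 ≤ k) : qint q k ≠ 0 :=
  div_ne_zero (sub_ne_zero.2 (hq k hk).symm) (one_sub_ne_zero_of_pow_ne_one hq)

lemma qint_one (hq : 1 - q ≠ 0) : qint q 1 = 1 := by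
  rw [qint, pow_one, div_self hq]

lemma Bpoly_factor_eq_qint (z : F) (hq : 1 - q ≠ 0) (j : ℕ) :
    (z - q ^ j) / (1 - q ^ (j + 1)) = ((z - 1) / (1 - q) + qint q j) / qint q (j + 1) := by
  rw [qint, qint, ← add_div, div_div_div_cancel_right₀ hq]
  ring_nf

theorem Bpoly_eq_mul_prod (z : F) (hq : ∀ k : ℕ, 1 ≤ k → q ^ k ≠ 1) {n : ℕ} (hn : 1 ≤ n) :
    Bpoly q z n = (z - 1) / (1 - q) * (qint q n)⁻¹ *
      ∏ k ∈ Ico 1 n, (1 + (z - 1) / (1 - q) * (qint q k)⁻¹) := by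
  have hq1 := one_sub_ne_zero_of_pow_ne_one hq
  induction n, hn using Nat.le_induction with
  | base => simp [Bpoly, qint_one hq1]
  | succ n hn ih =>
    rw [Bpoly, prod_range_succ, ← Bpoly, ih, Bpoly_factor_eq_qint z hq1, prod_Ico_succ_top hn]
    have := qint_ne_zero hq hn
    field_simp
    ring

end QInt

theorem stmt_9_general {F : Type*} [Field F] (q z : F)
    (hq1 : ∀ n : ℕ, 1 ≤ n → q ^ n ≠ 1) (n : ℕ) (hn : 1 ≤ n) :
    Bpoly q z n =
      ∑ m ∈ Finset.range n,
        (∑ c ∈ Finset.univ.filter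
            (fun c : Fin (m + 1) → Fin (n + 1) =>
              (∀ i j : Fin (m + 1), i < j → c j < c i) ∧
              ((c 0 : ℕ) = n) ∧ ∀ i, 1 ≤ (c i : ℕ)),
          ∏ i, (qint q (c i : ℕ))⁻¹) * ((z - 1) / (1 - q)) ^ (m + 1) := by
  change _ = ∑ m ∈ range n, (∑ c ∈ chains m n, ∏ i, (qint q (c i : ℕ))⁻¹) * _
  set x := (z - 1) / (1 - q)
  calc Bpoly q z n = x * (qint q n)⁻¹ * ∏ k ∈ Ico 1 n, (1 + x * (qint q k)⁻¹) :=
        Bpoly_eq_mul_prod z hq1 hn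
    _ = x * (qint q n)⁻¹ * ∑ m ∈ range n,
          (∑ t ∈ powersetCard m (Ico 1 n), ∏ k ∈ t, (qint q k)⁻¹) * x ^ m := by
        rw [← sum_powersetCard_mul_pow, Nat.card_Ico, Nat.sub_add_cancel hn]
    _ = _ := by
        rw [mul_sum]
        refine sum_congr rfl fun m _ => ?_
        rw [sum_chains_prod_eq_mul_sum_powersetCard (fun k => (qint q k)⁻¹) hn]
        ring

/-- For `n ≥ 1`, `B_n(z) = Σ_{m=1}^{n} a_m(n-1) ((z-1)/(1-q))^m` where
`a_m(n-1)` is the sum over strictly decreasing chains `n = m₁ > m₂ > ⋯ > m_m ≥ 1`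
of `∏ 1/[m_i]`.  Chains of length `m+1` (so lengths `1,…,n`) are encoded as
strictly antitone functions `c : Fin (m+1) → Fin (n+1)` with `c 0 = n` and all
values at least `1`. -/
theorem stmt_9 {F : Type*} [Field F] (q z : F) (hq : q ≠ 0)
    (hq1 : ∀ n : ℕ, 1 ≤ n → q ^ n ≠ 1) (n : ℕ) (hn : 1 ≤ n) :
    Bpoly q z n =
      ∑ m ∈ Finset.range n,
        (∑ c ∈ Finset.univ.filter
            (fun c : Fin (m + 1) → Fin (n + 1) =>
              (∀ i j : Fin (m + 1), i < j → c j < c i) ∧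
              ((c 0 : ℕ) = n) ∧ ∀ i, 1 ≤ (c i : ℕ)),
          ∏ i, (qint q (c i : ℕ))⁻¹) * ((z - 1) / (1 - q)) ^ (m + 1) :=
  stmt_9_general q z hq1 n hn
end

section
/- Define, for a composition k = (k₁,…,k_r) of positive integers and n ∈ ℕ, the finite harmonic q-sum A_k(n) := Σ_{n ≥ m₁ > ⋯ > m_r > 0} q^{(k₁-1)m₁ + ⋯ + (k_r-1)m_r} / ([m₁]^{k₁}⋯[m_r]^{k_r}) with [m] = (1-q^m)/(1-q). Then for any two single-letter compositions, A_{(i)}(n) · A_{(j)}(n) = A_{(i,j)}(n) + A_{(j,i)}(n) + A_{(i+j)}(n) + (1-q) A_{(i+j-1)}(n) for all i, j ≥ 1 and n ∈ ℕ (with the convention that A_{(0)} is interpreted via the formula only when i+j-1 ≥ 1). -/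
/-- Depth-one harmonic sum `A_{(i)}(n) = Σ_{n ≥ m ≥ 1} q^{(i-1)m}/[m]^i`. -/
def A1 {F : Type*} [Field F] (q : F) (i n : ℕ) : F :=
  ∑ m ∈ Finset.Icc 1 n, q ^ ((i - 1) * m) / qint q m ^ i

/-- Depth-two harmonic sum `A_{(i,j)}(n) = Σ_{n ≥ m₁ > m₂ ≥ 1}
`q^{(i-1)m₁+(j-1)m₂}/([m₁]^i [m₂]^j)`. -/
def A2 {F : Type*} [Field F] (q : F) (i j n : ℕ) : F :=
  ∑ m₁ ∈ Finset.Icc 1 n, ∑ m₂ ∈ Finset.Icc 1 (m₁ - 1),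
    q ^ ((i - 1) * m₁ + (j - 1) * m₂) / (qint q m₁ ^ i * qint q m₂ ^ j)

/-!
Induction on `n`. Passing from `n` to `n + 1` adds to the product the two cross terms, which
extend the depth-two sums, and the diagonal term at `m = n + 1`, which splits into the two
depth-one terms because `q ^ m + (1 - q) * [m] = 1`.
-/

theorem pow_add_one_sub_mul_qint {F : Type*} [Field F] (q : F) (m : ℕ) :
    q ^ m + (1 - q) * qint q m = 1 := by
  rcases eq_or_ne q 1 with rfl | hq
  · simp [qint]
  · rw [qint, mul_div_cancel₀ _ (sub_ne_zero.mpr hq.symm)]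
    ring

theorem div_pow_succ_mul_div_pow_succ {F : Type*} [Field F] {x c D : F}
    (h : x + c * D = 1) (a b : ℕ) :
    x ^ a / D ^ (a + 1) * (x ^ b / D ^ (b + 1)) =
      x ^ (a + b + 1) / D ^ (a + b + 2) + c * (x ^ (a + b) / D ^ (a + b + 1)) := by
  rcases eq_or_ne D 0 with rfl | hD
  · simp
  · calc x ^ a / D ^ (a + 1) * (x ^ b / D ^ (b + 1))
        _ = x ^ (a + b) / D ^ (a + b + 2) * (x + c * D) := by
          rw [h, mul_one, div_mul_div_comm, ← pow_add, ← pow_add]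
          ring_nf
        _ = _ := by
          field_simp
          ring

theorem A1_succ {F : Type*} [Field F] (q : F) (i n : ℕ) :
    A1 q i (n + 1) = A1 q i n + q ^ ((i - 1) * (n + 1)) / qint q (n + 1) ^ i := by
  rw [A1, A1, Finset.sum_Icc_succ_top (by omega)]

theorem A2_succ {F : Type*} [Field F] (q : F) (i j n : ℕ) :
    A2 q i j (n + 1) = A2 q i j n +
      q ^ ((i - 1) * (n + 1)) / qint q (n + 1) ^ i * A1 q j n := by
  rw [A2, A2, A1, Finset.sum_Icc_succ_top (by omega), Nat.add_sub_cancel, Finset.mul_sum]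
  congr 1
  refine Finset.sum_congr rfl fun m _ => ?_
  rw [pow_add, div_mul_div_comm]

theorem stmt_12_general {F : Type*} [Field F] (q : F)
    (i j n : ℕ) (hi : 1 ≤ i) (hj : 1 ≤ j) :
    A1 q i n * A1 q j n =
      A2 q i j n + A2 q j i n + A1 q (i + j) n + (1 - q) * A1 q (i + j - 1) n := by
  obtain ⟨a, rfl⟩ : ∃ a, i = a + 1 := ⟨i - 1, by omega⟩
  obtain ⟨b, rfl⟩ : ∃ b, j = b + 1 := ⟨j - 1, by omega⟩
  rw [show a + 1 + (b + 1) = a + b + 2 by ring, show a + b + 2 - 1 = a + b + 1 by rfl]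
  induction n with
  | zero => simp [A1, A2]
  | succ n ih =>
    have hdiag := div_pow_succ_mul_div_pow_succ (pow_add_one_sub_mul_qint q (n + 1)) a b
    simp only [← pow_mul] at hdiag
    rw [A1_succ, A1_succ, A2_succ, A2_succ, A1_succ, A1_succ]
    simp only [Nat.add_sub_cancel, show a + b + 2 - 1 = a + b + 1 by rfl, mul_comm _ (n + 1)] at *
    linear_combination ih + hdiag

theorem stmt_12 {F : Type*} [Field F] (q : F)
    (hq1 : ∀ n : ℕ, 1 ≤ n → q ^ n ≠ 1) (i j n : ℕ) (hi : 1 ≤ i) (hj : 1 ≤ j) :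
    A1 q i n * A1 q j n =
      A2 q i j n + A2 q j i n + A1 q (i + j) n + (1 - q) * A1 q (i + j - 1) n :=
  stmt_12_general q i j n hi hj
end

section
/- Let ξ_i := Σ_{k=0}^{i-1} C(i-1,k) (-ħ)^{i-1-k} z_{k+1} be elements of the free module with basis {z_n}_{n≥1} over Q[ħ], equipped with the bilinear product z_i ∘_- z_j := -z_{i+j} + ħ z_{i+j-1}. Then for all i, j ≥ 1: ξ_i ∘_- ξ_j = -ξ_{i+j}. -/
open Polynomial

/-- The free `ℚ[ħ]`-module on generators `{z_n}`, as finitely supported functions;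
the basis element `z_n` is `Finsupp.single n 1`, and `ħ` is `Polynomial.X`. -/
abbrev Zmod : Type := ℕ →₀ Polynomial ℚ

/-- The bilinear product `∘₋` with `z_i ∘₋ z_j = -z_{i+j} + ħ z_{i+j-1}`. -/
noncomputable def circMinus (a b : Zmod) : Zmod :=
  a.sum fun i c => b.sum fun j d =>
    (c * d) • (-(Finsupp.single (i + j) (1 : Polynomial ℚ)) +
      Finsupp.single (i + j - 1) (Polynomial.X : Polynomial ℚ))

/-- `ξ_i = Σ_{k=0}^{i-1} C(i-1,k) (-ħ)^{i-1-k} z_{k+1}`. -/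
noncomputable def xi (i : ℕ) : Zmod :=
  ∑ k ∈ Finset.range i,
    ((Nat.choose (i - 1) k : Polynomial ℚ) * (-Polynomial.X) ^ (i - 1 - k)) •
      Finsupp.single (k + 1) (1 : Polynomial ℚ)

/-!
Identify `z_n` with `t ^ n` in `ℚ[ħ][t]`. For `a` with no `z_0` component, say `a ↔ t p`, the
product becomes `a ∘₋ b ↔ p q (ħ - t)`, and the binomial theorem gives `ξ_{m+1} ↔ t (t - ħ) ^ m`.
So `ξ_{m+1} ∘₋ ξ_{n+1} ↔ (t - ħ) ^ m · t (t - ħ) ^ n · (ħ - t) = -t (t - ħ) ^ (m + n + 1)`,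
which is `-ξ_{m+n+2}`.
-/

noncomputable def ofPoly : Polynomial (Polynomial ℚ) ≃+ Zmod :=
  (toFinsuppIso (Polynomial ℚ)).toAddEquiv.trans AddMonoidAlgebra.coeffAddEquiv

lemma ofPoly_monomial (n : ℕ) (c : Polynomial ℚ) : ofPoly (monomial n c) = Finsupp.single n c := by
  simp [ofPoly]

lemma circMinus_add_left (a a' b : Zmod) :
    circMinus (a + a') b = circMinus a b + circMinus a' b := by
  unfold circMinus
  rw [Finsupp.sum_add_index']
  · simp
  · intro i c c'
    rw [← Finsupp.sum_add]
    exact Finsupp.sum_congr fun j _ => by rw [add_mul, add_smul]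

lemma circMinus_add_right (a b b' : Zmod) :
    circMinus a (b + b') = circMinus a b + circMinus a b' := by
  unfold circMinus
  rw [← Finsupp.sum_add]
  refine Finsupp.sum_congr fun i _ => ?_
  rw [Finsupp.sum_add_index']
  · simp
  · intro j d d'
    rw [mul_add, add_smul]

lemma circMinus_single_single (i j : ℕ) (c d : Polynomial ℚ) :
    circMinus (Finsupp.single i c) (Finsupp.single j d) =
      -Finsupp.single (i + j) (c * d) + Finsupp.single (i + j - 1) (c * d * X) := by
  simp [circMinus, smul_add, Finsupp.smul_single]

lemma circMinus_ofPoly_X_mul (p q : Polynomial (Polynomial ℚ)) :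
    circMinus (ofPoly (X * p)) (ofPoly q) = ofPoly (p * q * (C X - X)) := by
  induction p using Polynomial.induction_on' with
  | add p p' hp hp' => rw [mul_add, map_add, circMinus_add_left, hp, hp', add_mul, add_mul, map_add]
  | monomial i c =>
    induction q using Polynomial.induction_on' with
    | add q q' hq hq' => rw [map_add, circMinus_add_right, hq, hq', mul_add, add_mul, map_add]
    | monomial j d =>
      rw [X_mul_monomial, ofPoly_monomial, ofPoly_monomial, circMinus_single_single,
        monomial_mul_monomial, mul_sub, monomial_mul_C, monomial_mul_X, map_sub,
        ofPoly_monomial, ofPoly_monomial, Nat.add_right_comm, Nat.add_sub_cancel]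
      abel

lemma xi_succ_eq_ofPoly (m : ℕ) : xi (m + 1) = ofPoly (X * (X - C X) ^ m) := by
  rw [sub_eq_add_neg, add_pow, Finset.mul_sum, map_sum, xi]
  refine Finset.sum_congr rfl fun k _ => ?_
  rw [Nat.add_sub_cancel, Finsupp.smul_single, smul_eq_mul, mul_one, ← ofPoly_monomial,
    ← C_mul_X_pow_eq_monomial]
  simp only [map_mul, map_pow, map_neg, map_natCast]
  exact congrArg ofPoly (by ring)

theorem stmt_17 (i j : ℕ) (hi : 1 ≤ i) (hj : 1 ≤ j) :
    circMinus (xi i) (xi j) = -xi (i + j) := by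
  obtain ⟨m, rfl⟩ := Nat.exists_eq_add_of_le' hi
  obtain ⟨n, rfl⟩ := Nat.exists_eq_add_of_le' hj
  rw [xi_succ_eq_ofPoly, xi_succ_eq_ofPoly, circMinus_ofPoly_X_mul, show m + 1 + (n + 1) = m + n + 1 + 1 by ring,
    xi_succ_eq_ofPoly, ← map_neg]
  congr 1
  ring
end
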